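/- Let S be a prox-regular closed subset of a Hilbert space H and let x ∈ S. Then the proximal normal cone N_S(x) equals the polar of the Bouligand tangent cone: N_S(x) = (T_S x)° = {u ∈ H : d'_S(x; u) = 0}°, where d'_S(x; u) := lim_{τ↓0} τ⁻¹ d_S(x + τu) (which exists for every u ∈ H). -/

import Mathlib

/-!
Proximal normals of an `R`-prox-regular set are hypomonotone: `2R⟪ς, s - y⟫ ≤ ‖ς‖ ‖s - y‖²` for
`ς ∈ N_S(y)`. Applied at nearest points of points close to the segment `[x, s]` (such points are
dense, by a Borwein–Preiss iteration), it gives `d_S(x + t(s - x)) ≤ t ‖s - x‖² / R`: chords are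
almost tangent. Iterating the passage from a direction `u` to a nearby chord produces exact tangent
directions `w` with `‖u - w‖ ≤ liminf_{τ → 0⁺} d_S(x + τu)/τ + ε`; as `u ↦ d_S(x + τu)/τ` is
1-Lipschitz, `d'_S(x; u)` exists and equals `dist(u, T_S x)`.

Hypomonotonicity at `x` gives `N_S(x) ⊆ (T_S x)°`. Conversely, `⟪ς, u⟫ ≤ ‖ς‖ dist(u, T_S x)` for
`ς ∈ (T_S x)°`, and `dist(s - x, T_S x) ≤ ‖s - x‖² / R` by the chord estimate, which is the
proximal normal inequality at `x`.
-/

open Metric Filter Topology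

variable {H : Type*} [NormedAddCommGroup H] [InnerProductSpace ℝ H]

/-- The set of nearest points of `S` to `y`. -/
def projSet (S : Set H) (y : H) : Set H := {x ∈ S | ∀ s ∈ S, dist y x ≤ dist y s}

/-- The proximal normal cone to `S` at `x`. -/
def proxNormalCone (S : Set H) (x : H) : Set H :=
  {ς | ∃ η : ℝ, 0 < η ∧ x ∈ projSet S (x + η • ς)}

/-- `S` is `R`-prox-regular. -/
def IsProxRegular (R : ℝ) (S : Set H) : Prop :=
  ∀ x ∈ S, ∀ ς ∈ proxNormalCone S x, ‖ς‖ ≤ 1 →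
    ∀ t : ℝ, 0 < t → t < R → x ∈ projSet S (x + t • ς)

/-- The polar of a set (cone) `P`. -/
def polarCone (P : Set H) : Set H := {ς | ∀ u ∈ P, (inner ℝ ς u : ℝ) ≤ 0}

open scoped RealInnerProductSpace

lemma dist_le_dist_iff_two_mul_inner_le (y x s : H) :
    dist y x ≤ dist y s ↔ 2 * ⟪y - x, s - x⟫ ≤ ‖s - x‖ ^ 2 := by
  have hys : y - s = (y - x) - (s - x) := by abel
  rw [dist_eq_norm, dist_eq_norm,
    ← pow_le_pow_iff_left₀ (norm_nonneg _) (norm_nonneg _) two_ne_zero, hys,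
    norm_sub_sq_real (y - x) (s - x)]
  constructor <;> intro h <;> linarith

lemma mem_projSet_iff {S : Set H} {x y : H} :
    x ∈ projSet S y ↔ x ∈ S ∧ ∀ s ∈ S, 2 * ⟪y - x, s - x⟫ ≤ ‖s - x‖ ^ 2 := by
  simp only [projSet, Set.mem_ofPred_eq, dist_le_dist_iff_two_mul_inner_le]

lemma mem_proxNormalCone_iff {S : Set H} {x ς : H} (hx : x ∈ S) :
    ς ∈ proxNormalCone S x ↔ ∃ η > 0, ∀ s ∈ S, 2 * η * ⟪ς, s - x⟫ ≤ ‖s - x‖ ^ 2 := by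
  simp only [proxNormalCone, Set.mem_ofPred_eq, mem_projSet_iff, add_sub_cancel_left,
    real_inner_smul_left, ← mul_assoc, hx, true_and]

lemma infDist_eq_dist_of_mem_projSet {E : Type*} [NormedAddCommGroup E] {S : Set E} {z p : E}
    (hp : p ∈ projSet S z) : infDist z S = dist z p :=
  le_antisymm (infDist_le_dist_of_mem hp.1) ((le_infDist ⟨p, hp.1⟩).2 hp.2)

lemma sub_mem_proxNormalCone_of_mem_projSet {S : Set H} {z p : H} (hp : p ∈ projSet S z) :
    z - p ∈ proxNormalCone S p :=
  ⟨1, one_pos, by rwa [one_smul, add_sub_cancel]⟩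

lemma mem_proxNormalCone_of_inner_le {S : Set H} {x ς : H} (hx : x ∈ S) {C : ℝ} (hC : 0 ≤ C)
    (h : ∀ s ∈ S, ⟪ς, s - x⟫ ≤ C * ‖s - x‖ ^ 2) : ς ∈ proxNormalCone S x := by
  refine (mem_proxNormalCone_iff hx).2 ⟨1 / (2 * (C + 1)), by positivity, fun s hs => ?_⟩
  have hfrac : C / (C + 1) ≤ 1 := (div_le_one (by positivity)).2 (by linarith)
  calc 2 * (1 / (2 * (C + 1))) * ⟪ς, s - x⟫ ≤ 2 * (1 / (2 * (C + 1))) * (C * ‖s - x‖ ^ 2) :=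
        mul_le_mul_of_nonneg_left (h s hs) (by positivity)
    _ = C / (C + 1) * ‖s - x‖ ^ 2 := by field_simp
    _ ≤ ‖s - x‖ ^ 2 := mul_le_of_le_one_left (sq_nonneg _) hfrac

lemma smul_mem_proxNormalCone {S : Set H} {x ς : H} (hς : ς ∈ proxNormalCone S x) {c : ℝ}
    (hc : 0 < c) : c • ς ∈ proxNormalCone S x := by
  obtain ⟨η, hη, h⟩ := hς
  exact ⟨η / c, div_pos hη hc, by rwa [smul_smul, div_mul_cancel₀ _ hc.ne']⟩

lemma exists_sq_dist_lt_sq_infDist_add {α : Type*} [PseudoMetricSpace α] {S : Set α}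
    (hne : S.Nonempty) (z : α) {e : ℝ} (he : 0 < e) :
    ∃ q ∈ S, dist z q ^ 2 < infDist z S ^ 2 + e := by
  have hsq : ∀ᶠ r in 𝓝 (infDist z S), r ^ 2 < infDist z S ^ 2 + e :=
    (continuous_pow 2).continuousAt.eventually_lt continuousAt_const (lt_add_of_pos_right _ he)
  obtain ⟨r, hr, hdr⟩ := ((hsq.filter_mono nhdsWithin_le_nhds).and
    (self_mem_nhdsWithin (s := Set.Ioi (infDist z S)))).exists
  obtain ⟨q, hq, hzq⟩ := (infDist_lt_iff hne).1 hdr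
  exact ⟨q, hq, (pow_lt_pow_left₀ hzq dist_nonneg two_ne_zero).trans hr⟩

lemma norm_sub_sq_sub_norm_sub_sq_add_smul (q q' z p : H) (θ : ℝ) :
    ‖q - (z + θ • (p - z))‖ ^ 2 - ‖q' - (z + θ • (p - z))‖ ^ 2 =
      (1 - θ) * (‖q - z‖ ^ 2 - ‖q' - z‖ ^ 2) + θ * (‖q - p‖ ^ 2 - ‖q' - p‖ ^ 2) := by
  simp only [norm_sub_sq_real, inner_add_right, inner_smul_right, inner_sub_right]
  ring

/-- Moving `z` towards its almost nearest point `q` penalises every almost nearest point `q'` of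
the new position by its squared distance to `q`. -/
lemma mul_sq_dist_le_of_sq_dist_lt {S : Set H} {z q q' : H} {θ e e' : ℝ} (hθ0 : 0 ≤ θ)
    (hθ1 : θ ≤ 1) (hq : q ∈ S) (hq' : q' ∈ S) (hqz : dist z q ^ 2 < infDist z S ^ 2 + e)
    (hq'z : dist (z + θ • (q - z)) q' ^ 2 < infDist (z + θ • (q - z)) S ^ 2 + e') :
    θ * dist q q' ^ 2 ≤ e + e' := by
  have hd : infDist z S ^ 2 ≤ dist z q' ^ 2 :=
    pow_le_pow_left₀ infDist_nonneg (infDist_le_dist_of_mem hq') 2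
  have hd' : infDist (z + θ • (q - z)) S ^ 2 ≤ dist (z + θ • (q - z)) q ^ 2 :=
    pow_le_pow_left₀ infDist_nonneg (infDist_le_dist_of_mem hq) 2
  have he : 0 ≤ e := by
    nlinarith [pow_le_pow_left₀ infDist_nonneg (infDist_le_dist_of_mem hq (x := z)) 2]
  have hid := norm_sub_sq_sub_norm_sub_sq_add_smul q' q z q θ
  simp only [dist_eq_norm'] at *
  rw [sub_self, norm_zero, zero_pow two_ne_zero, sub_zero] at hid
  nlinarith [mul_nonneg (sub_nonneg.2 hθ1) (show 0 ≤ ‖q' - z‖ ^ 2 - ‖q - z‖ ^ 2 + e by linarith)]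

lemma dist_le_two_mul_of_sq_dist_lt {S : Set H} {z q q' : H} {θ θ' : ℝ} (hθ : 0 < θ)
    (hθ' : 0 ≤ θ') (hθθ' : θ' ≤ θ) (hθ1 : θ ≤ 1) (hq : q ∈ S) (hq' : q' ∈ S)
    (hqz : dist z q ^ 2 < infDist z S ^ 2 + θ ^ 3)
    (hq'z : dist (z + θ • (q - z)) q' ^ 2 < infDist (z + θ • (q - z)) S ^ 2 + θ' ^ 3) :
    dist q q' ≤ 2 * θ := by
  have h := mul_sq_dist_le_of_sq_dist_lt hθ.le hθ1 hq hq' hqz hq'z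
  have hsq : dist q q' ^ 2 ≤ (2 * θ) ^ 2 := le_of_mul_le_mul_left
    (by nlinarith [pow_le_pow_left₀ hθ' hθθ' 3, pow_pos hθ 3]) hθ
  exact (pow_le_pow_iff_left₀ dist_nonneg (by positivity) two_ne_zero).1 hsq

lemma dist_add_smul_sub_le {E : Type*} [NormedAddCommGroup E] [NormedSpace ℝ E] {S : Set E}
    {z q : E} {θ e : ℝ} (hθ : 0 ≤ θ) (he : e ≤ 1) (hqz : dist z q ^ 2 < infDist z S ^ 2 + e) :
    dist z (z + θ • (q - z)) ≤ θ * (infDist z S + 1) := by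
  have hd : 0 ≤ infDist z S := infDist_nonneg
  have hzq : dist z q < infDist z S + 1 :=
    (pow_lt_pow_iff_left₀ dist_nonneg (by positivity) two_ne_zero).1 (hqz.trans_le (by nlinarith))
  rw [dist_eq_norm', add_sub_cancel_left, norm_smul, Real.norm_of_nonneg hθ, ← dist_eq_norm']
  exact mul_le_mul_of_nonneg_left hzq.le hθ

lemma mem_projSet_of_tendsto {E : Type*} [NormedAddCommGroup E] {S : Set E} (hS : IsClosed S)
    {Z Q : ℕ → E} {e : ℕ → ℝ} {z p : E}
    (hZ : Tendsto Z atTop (𝓝 z)) (hQ : Tendsto Q atTop (𝓝 p)) (he : Tendsto e atTop (𝓝 0))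
    (hQS : ∀ n, Q n ∈ S) (hZQ : ∀ n, dist (Z n) (Q n) ^ 2 ≤ infDist (Z n) S ^ 2 + e n) :
    p ∈ projSet S z := by
  have hlim : dist z p ^ 2 ≤ infDist z S ^ 2 + 0 :=
    le_of_tendsto_of_tendsto' ((hZ.dist hQ).pow 2)
      ((((continuous_infDist_pt S).tendsto z).comp hZ).pow 2 |>.add he) hZQ
  have hzp : dist z p ≤ infDist z S :=
    (pow_le_pow_iff_left₀ dist_nonneg infDist_nonneg two_ne_zero).1 (by simpa using hlim)
  exact ⟨hS.mem_of_tendsto hQ (Eventually.of_forall hQS),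
    fun s hs => hzp.trans (infDist_le_dist_of_mem hs)⟩

/-- A Borwein–Preiss type iteration: `Z` moves by geometrically decreasing steps towards almost
nearest points `Q n`, and `mul_sq_dist_le_of_sq_dist_lt` makes `Q` a Cauchy sequence. -/
theorem dense_setOf_projSet_nonempty [CompleteSpace H] {S : Set H} (hne : S.Nonempty)
    (hS : IsClosed S) : Dense {z : H | (projSet S z).Nonempty} := by
  refine Metric.dense_iff.2 fun y ε hε => ?_
  set B := infDist y S + ε + 1
  have hεB : ε < B := by linarith [infDist_nonneg (x := y) (s := S)]
  have hB : 0 < B := hε.trans hεB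
  set θ : ℕ → ℝ := fun n => ε / (4 * B) / 2 ^ n
  have hθ0 : ∀ n, 0 < θ n := fun n => by positivity
  have hθ1 : ∀ n, θ n ≤ 1 := fun n =>
    (div_le_self (by positivity) (one_le_pow₀ one_le_two)).trans
      ((div_le_one (by positivity)).2 (by linarith))
  choose pick hpickS hpick using fun (z : H) (n : ℕ) =>
    exists_sq_dist_lt_sq_infDist_add hne z (pow_pos (hθ0 n) 3)
  let Z : ℕ → H := fun n => Nat.rec y (fun n z => z + θ n • (pick z n - z)) n
  let Q : ℕ → H := fun n => pick (Z n) n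
  have hZstep : ∀ n, ‖Z n - y‖ ≤ ε → dist (Z n) (Z (n + 1)) ≤ ε / 2 / 2 / 2 ^ n := by
    intro n hn
    have hd : infDist (Z n) S ≤ infDist y S + ‖Z n - y‖ :=
      dist_eq_norm (Z n) y ▸ infDist_le_infDist_add_dist
    calc dist (Z n) (Z (n + 1)) ≤ θ n * (infDist (Z n) S + 1) :=
          dist_add_smul_sub_le (hθ0 n).le (pow_le_one₀ (hθ0 n).le (hθ1 n)) (hpick (Z n) n)
      _ ≤ θ n * B := mul_le_mul_of_nonneg_left (by linarith) (hθ0 n).le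
      _ = ε / 2 / 2 / 2 ^ n := by simp only [θ]; field_simp; ring
  have hZy : ∀ n, ‖Z n - y‖ ≤ ε / 2 - ε / 2 / 2 ^ n := by
    intro n
    induction n with
    | zero => simp [Z]
    | succ n ih =>
      have h := hZstep n (ih.trans (by linarith [show 0 < ε / 2 / 2 ^ n by positivity]))
      calc ‖Z (n + 1) - y‖ ≤ ‖Z n - y‖ + dist (Z n) (Z (n + 1)) := by
            rw [dist_comm, dist_eq_norm]
            exact (norm_sub_le_norm_sub_add_norm_sub _ (Z n) _).trans_eq (add_comm _ _)
        _ ≤ ε / 2 - ε / 2 / 2 ^ (n + 1) := by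
            rw [show ε / 2 / 2 ^ (n + 1) = ε / 2 / 2 ^ n - ε / 2 / 2 / 2 ^ n by ring]; linarith
  have hZcauchy : ∀ n, dist (Z n) (Z (n + 1)) ≤ ε / 2 / 2 / 2 ^ n := fun n =>
    hZstep n ((hZy n).trans (by linarith [show 0 < ε / 2 / 2 ^ n by positivity]))
  have hQcauchy : ∀ n, dist (Q n) (Q (n + 1)) ≤ 4 * θ 0 / 2 / 2 ^ n := fun n =>
    (dist_le_two_mul_of_sq_dist_lt (hθ0 n) (hθ0 (n + 1)).le
      (div_le_div_of_nonneg_left (by positivity) (by positivity)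
        (pow_le_pow_right₀ one_le_two n.le_succ))
      (hθ1 n) (hpickS _ _) (hpickS _ _) (hpick (Z n) n) (hpick (Z (n + 1)) (n + 1))).trans_eq
      (by simp only [θ]; ring)
  obtain ⟨z, hz⟩ := cauchySeq_tendsto_of_complete (cauchySeq_of_le_geometric_two hZcauchy)
  obtain ⟨p, hp⟩ := cauchySeq_tendsto_of_complete (cauchySeq_of_le_geometric_two hQcauchy)
  have hθlim : Tendsto θ atTop (𝓝 0) :=
    tendsto_const_nhds.div_atTop (tendsto_pow_atTop_atTop_of_one_lt one_lt_two)
  refine ⟨z, ?_, p, mem_projSet_of_tendsto hS hz hp (by simpa using hθlim.pow 3)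
    (fun n => hpickS _ _) (fun n => (hpick _ _).le)⟩
  rw [mem_ball, dist_comm]
  exact (dist_le_of_le_geometric_two_of_tendsto₀ hZcauchy hz).trans_lt (half_lt_self hε)

theorem exists_dist_le_forall_pos_of_refine {X : Type*} [PseudoMetricSpace X] [CompleteSpace X]
    {P : ℝ → X → Prop} (hP : ∀ c r v w, P c v → dist v w ≤ r → P (c + r) w)
    (hrefine : ∀ c κ v, P c v → 0 < κ → ∃ w, dist v w ≤ c + κ ∧ P κ w)
    {c ε : ℝ} {v : X} (hv : P c v) (hε : 0 < ε) :
    ∃ w, dist v w ≤ c + ε ∧ ∀ κ > 0, P κ w := by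
  choose! next hnext_dist hnext using hrefine
  set κ : ℕ → ℝ := fun n => ε / 8 / 2 ^ n
  have hκ : ∀ n, 0 < κ n := fun n => by positivity
  let V : ℕ → X := fun n => Nat.rec (next c (κ 0) v) (fun n w => next (κ n) (κ (n + 1)) w) n
  have hV : ∀ n, P (κ n) (V n) := by
    intro n
    induction n with
    | zero => exact hnext _ _ _ hv (hκ 0)
    | succ n ih => exact hnext _ _ _ ih (hκ (n + 1))
  have hstep : ∀ n, dist (V n) (V (n + 1)) ≤ ε / 2 / 2 / 2 ^ n := fun n =>
    (hnext_dist _ _ _ (hV n) (hκ (n + 1))).trans <| by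
      simp only [κ, pow_succ]; field_simp; linarith
  obtain ⟨w, hw⟩ := cauchySeq_tendsto_of_complete (cauchySeq_of_le_geometric_two hstep)
  refine ⟨w, ?_, fun η hη => ?_⟩
  · calc dist v w ≤ dist v (V 0) + dist (V 0) w := dist_triangle _ _ _
      _ ≤ (c + κ 0) + ε / 2 := add_le_add (hnext_dist _ _ _ hv (hκ 0))
          (dist_le_of_le_geometric_two_of_tendsto₀ hstep hw)
      _ ≤ c + ε := by simp only [κ]; linarith
  · obtain ⟨n, hn⟩ := exists_pow_lt_of_lt_one (show 0 < η / ε by positivity) one_half_lt_one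
    have hdist := dist_le_of_le_geometric_two_of_tendsto hstep hw n
    have hκn : κ n + (η - κ n) = η := add_sub_cancel _ _
    refine hκn ▸ hP _ _ _ _ (hV n) (hdist.trans ?_)
    rw [one_div_pow, lt_div_iff₀ hε] at hn
    simp only [κ]
    field_simp at hn ⊢
    linarith

/-- The difference quotient `τ⁻¹ d_S(x + τ u)` whose limit as `τ → 0⁺` is `d'_S(x; u)`. -/
noncomputable def distQuot (S : Set H) (x u : H) (τ : ℝ) : ℝ := τ⁻¹ * infDist (x + τ • u) S

def bouligandCone (S : Set H) (x : H) : Set H :=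
  {u | Tendsto (distQuot S x u) (𝓝[>] 0) (𝓝 0)}

section distQuot

variable {S : Set H} {x : H}

lemma distQuot_nonneg (u : H) {τ : ℝ} (hτ : 0 ≤ τ) : 0 ≤ distQuot S x u τ :=
  mul_nonneg (inv_nonneg.2 hτ) infDist_nonneg

lemma distQuot_le_add_norm_sub (u v : H) {τ : ℝ} (hτ : 0 < τ) :
    distQuot S x u τ ≤ distQuot S x v τ + ‖u - v‖ := by
  have h : infDist (x + τ • u) S ≤ infDist (x + τ • v) S + τ * ‖u - v‖ := by
    convert infDist_le_infDist_add_dist using 2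
    rw [dist_eq_norm, add_sub_add_left_eq_sub, ← smul_sub, norm_smul, Real.norm_of_nonneg hτ.le]
  calc distQuot S x u τ ≤ τ⁻¹ * (infDist (x + τ • v) S + τ * ‖u - v‖) :=
        mul_le_mul_of_nonneg_left h (inv_nonneg.2 hτ.le)
    _ = distQuot S x v τ + ‖u - v‖ := by rw [distQuot]; field_simp

lemma eventually_distQuot_le_of_dist_le {u v : H} {c r : ℝ}
    (hu : ∀ᶠ τ in 𝓝[>] 0, distQuot S x u τ ≤ c) (huv : dist u v ≤ r) :
    ∀ᶠ τ in 𝓝[>] 0, distQuot S x v τ ≤ c + r := by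
  filter_upwards [hu, self_mem_nhdsWithin] with τ hτ hτ0
  linarith [distQuot_le_add_norm_sub (S := S) (x := x) v u hτ0, norm_sub_rev u v,
    dist_eq_norm u v]

lemma zero_mem_bouligandCone (hx : x ∈ S) : (0 : H) ∈ bouligandCone S x := by
  refine tendsto_const_nhds.congr fun τ => ?_
  simp [distQuot, infDist_zero_of_mem hx]

lemma mem_bouligandCone_of_forall_eventually_le {u : H}
    (hu : ∀ κ > 0, ∀ᶠ τ in 𝓝[>] 0, distQuot S x u τ ≤ κ) : u ∈ bouligandCone S x := by
  refine tendsto_order.2 ⟨fun a ha => ?_, fun b hb => ?_⟩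
  · filter_upwards [self_mem_nhdsWithin] with τ hτ
    exact ha.trans_le (distQuot_nonneg u (le_of_lt hτ))
  · filter_upwards [hu (b / 2) (half_pos hb)] with τ hτ
    linarith

end distQuot

lemma inner_le_norm_mul_infDist_of_mem_polarCone {T : Set H} (hT : T.Nonempty) {ς : H}
    (hς : ς ∈ polarCone T) (u : H) : ⟪ς, u⟫ ≤ ‖ς‖ * infDist u T := by
  rcases eq_or_ne ς 0 with rfl | hς0
  · simp
  rw [← div_le_iff₀' (norm_pos_iff.2 hς0)]
  refine (le_infDist hT).2 fun w hw => (div_le_iff₀' (norm_pos_iff.2 hς0)).2 ?_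
  calc ⟪ς, u⟫ = ⟪ς, w⟫ + ⟪ς, u - w⟫ := by rw [← inner_add_right, add_sub_cancel]
    _ ≤ 0 + ‖ς‖ * ‖u - w‖ := add_le_add (hς w hw) (real_inner_le_norm _ _)
    _ = ‖ς‖ * dist u w := by rw [zero_add, dist_eq_norm]

namespace IsProxRegular

variable {S : Set H} {R : ℝ} {x : H}

theorem two_mul_inner_le (hprox : IsProxRegular R S) (hR : 0 < R) {y ς s : H} (hy : y ∈ S)
    (hς : ς ∈ proxNormalCone S y) (hs : s ∈ S) :
    2 * R * ⟪ς, s - y⟫ ≤ ‖ς‖ * ‖s - y‖ ^ 2 := by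
  rcases eq_or_ne ς 0 with rfl | hς0
  · simp
  have hnorm : 0 < ‖ς‖ := norm_pos_iff.2 hς0
  have hν : ‖‖ς‖⁻¹ • ς‖ ≤ 1 := by rw [norm_smul, norm_inv, norm_norm, inv_mul_cancel₀ hnorm.ne']
  have hlt : ∀ t ∈ Set.Ioo 0 R, 2 * t * ⟪ς, s - y⟫ ≤ ‖ς‖ * ‖s - y‖ ^ 2 := by
    rintro t ⟨ht0, htR⟩
    have h := (mem_projSet_iff.1 (hprox y hy _ (smul_mem_proxNormalCone hς (inv_pos.2 hnorm)) hν
      t ht0 htR)).2 s hs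
    rw [add_sub_cancel_left, smul_smul, real_inner_smul_left] at h
    calc 2 * t * ⟪ς, s - y⟫ = ‖ς‖ * (2 * (t * ‖ς‖⁻¹ * ⟪ς, s - y⟫)) := by field_simp
      _ ≤ ‖ς‖ * ‖s - y‖ ^ 2 := mul_le_mul_of_nonneg_left h hnorm.le
  have hlim : Tendsto (fun t => 2 * t * ⟪ς, s - y⟫) (𝓝[<] R) (𝓝 (2 * R * ⟪ς, s - y⟫)) :=
    ((continuous_const.mul continuous_id).mul continuous_const).continuousAt.mono_left
      nhdsWithin_le_nhds
  exact le_of_tendsto hlim (eventually_of_mem (Ioo_mem_nhdsLT hR) hlt)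

/-- The weighted sum of `two_mul_inner_le` at `p` for `x` and `s`, simplified by Stewart's
identity. -/
theorem two_mul_inner_le_of_mem_segment (hprox : IsProxRegular R S) (hR : 0 < R) {x s z p : H}
    (hx : x ∈ S) (hs : s ∈ S) (hp : p ∈ projSet S z) {t : ℝ} (ht0 : 0 ≤ t) (ht1 : t ≤ 1) :
    2 * R * ⟪z - p, x + t • (s - x) - p⟫ ≤
      ‖z - p‖ * (‖x + t • (s - x) - p‖ ^ 2 + t * (1 - t) * ‖s - x‖ ^ 2) := by
  have hς := sub_mem_proxNormalCone_of_mem_projSet hp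
  have h1 := mul_le_mul_of_nonneg_left (hprox.two_mul_inner_le hR hp.1 hς hx) (sub_nonneg.2 ht1)
  have h2 := mul_le_mul_of_nonneg_left (hprox.two_mul_inner_le hR hp.1 hς hs) ht0
  set m := x + t • (s - x)
  have hxp : x - p = (m - p) - t • (s - x) := by simp only [m]; abel
  have hsp : s - p = (m - p) + (1 - t) • (s - x) := by simp only [m]; module
  rw [hxp] at h1
  rw [hsp] at h2
  have hinner : ⟪z - p, m - p⟫ =
      (1 - t) * ⟪z - p, (m - p) - t • (s - x)⟫ + t * ⟪z - p, (m - p) + (1 - t) • (s - x)⟫ := by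
    simp only [inner_sub_right, inner_add_right, inner_smul_right]; ring
  have hnorm : ‖m - p‖ ^ 2 + t * (1 - t) * ‖s - x‖ ^ 2 =
      (1 - t) * ‖(m - p) - t • (s - x)‖ ^ 2 + t * ‖(m - p) + (1 - t) • (s - x)‖ ^ 2 := by
    simp only [norm_sub_sq_real, norm_add_sq_real, inner_smul_right, norm_smul, mul_pow,
      Real.norm_eq_abs, sq_abs]
    ring
  rw [hinner, hnorm]
  linarith

theorem two_mul_sub_le_of_mem_projSet (hprox : IsProxRegular R S) (hR : 0 < R) {x s z p : H}
    (hx : x ∈ S) (hs : s ∈ S) (hp : p ∈ projSet S z) (hz : z ∉ S) {t : ℝ} (ht0 : 0 ≤ t)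
    (ht1 : t ≤ 1) :
    2 * R * (dist z p - dist z (x + t • (s - x))) ≤
      (dist z p + dist z (x + t • (s - x))) ^ 2 + t * (1 - t) * ‖s - x‖ ^ 2 := by
  have hseg := hprox.two_mul_inner_le_of_mem_segment hR hx hs hp ht0 ht1
  set m := x + t • (s - x)
  rw [dist_eq_norm, dist_eq_norm] at *
  have hN : 0 < ‖z - p‖ := norm_pos_iff.2 <| sub_ne_zero.2 fun h => hz (h ▸ hp.1)
  have hinner : ‖z - p‖ * (‖z - p‖ - ‖z - m‖) ≤ ⟪z - p, m - p⟫ := by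
    have h := neg_le_of_abs_le (abs_real_inner_le_norm (z - p) (m - z))
    rw [norm_sub_rev m z] at h
    rw [show m - p = (z - p) + (m - z) by abel, inner_add_right, real_inner_self_eq_norm_sq]
    linarith
  have hnorm : ‖m - p‖ ≤ ‖z - p‖ + ‖z - m‖ := by
    rw [norm_sub_rev z m, add_comm]; exact norm_sub_le_norm_sub_add_norm_sub m z p
  have hsq := pow_le_pow_left₀ (norm_nonneg _) hnorm 2
  refine le_of_mul_le_mul_left ?_ hN
  nlinarith [mul_le_mul_of_nonneg_left hsq hN.le]

theorem infDist_add_smul_sub_le [CompleteSpace H] (hS : IsClosed S) (hprox : IsProxRegular R S)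
    (hR : 0 < R) {x s : H} (hx : x ∈ S) (hs : s ∈ S) (hsx : ‖s - x‖ ≤ R) {t : ℝ} (ht0 : 0 ≤ t)
    (ht1 : t ≤ 1) : infDist (x + t • (s - x)) S ≤ t * ‖s - x‖ ^ 2 / R := by
  set m := x + t • (s - x)
  set δ := infDist m S
  set a := t * (1 - t) * ‖s - x‖ ^ 2
  have ha : 0 ≤ a := by have := sub_nonneg.2 ht1; positivity
  have hδ0 : 0 ≤ δ := infDist_nonneg
  have key : ∀ e > 0, 2 * R * δ ≤ (δ + 2 * e) ^ 2 + a + 4 * R * e := by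
    intro e he
    obtain ⟨z, ⟨p, hp⟩, hmz⟩ := (dense_setOf_projSet_nonempty ⟨x, hx⟩ hS).exists_dist_lt m he
    have hδz : δ ≤ infDist z S + dist m z := infDist_le_infDist_add_dist
    have hzδ : infDist z S ≤ δ + dist m z := dist_comm m z ▸ infDist_le_infDist_add_dist
    by_cases hz : z ∈ S
    · rw [infDist_zero_of_mem hz] at hδz
      nlinarith
    · have h := hprox.two_mul_sub_le_of_mem_projSet hR hx hs hp hz ht0 ht1
      rw [← infDist_eq_dist_of_mem_projSet hp, dist_comm] at h
      have hsq : (infDist z S + dist m z) ^ 2 ≤ (δ + 2 * e) ^ 2 :=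
        pow_le_pow_left₀ (add_nonneg infDist_nonneg dist_nonneg) (by linarith) 2
      nlinarith
  have hlim : Tendsto (fun e => (δ + 2 * e) ^ 2 + a + 4 * R * e) (𝓝[>] 0) (𝓝 (δ ^ 2 + a)) := by
    have hcont : Continuous fun e : ℝ => (δ + 2 * e) ^ 2 + a + 4 * R * e := by fun_prop
    simpa using hcont.continuousAt.mono_left (nhdsWithin_le_nhds (a := (0 : ℝ)))
  have hmain : 2 * R * δ ≤ δ ^ 2 + a := ge_of_tendsto hlim (eventually_nhdsWithin_of_forall key)
  have hδm : δ ≤ t * ‖s - x‖ := by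
    calc δ ≤ dist m x := infDist_le_dist_of_mem hx
      _ = t * ‖s - x‖ := by
        rw [dist_eq_norm, add_sub_cancel_left, norm_smul, Real.norm_of_nonneg ht0]
  have hδR : δ ≤ R := hδm.trans (by nlinarith [norm_nonneg (s - x)])
  rw [le_div_iff₀ hR]
  nlinarith [mul_le_mul_of_nonneg_left hδR hδ0, mul_nonneg (mul_nonneg ht0 ht0) (sq_nonneg ‖s - x‖)]

theorem distQuot_le [CompleteSpace H] (hS : IsClosed S) (hprox : IsProxRegular R S) (hR : 0 < R)
    (hx : x ∈ S) {v : H} {τ σ : ℝ} (hxv : x + τ • v ∈ S) (hτv : τ * ‖v‖ ≤ R) (hσ : 0 < σ)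
    (hστ : σ ≤ τ) : distQuot S x v σ ≤ τ * ‖v‖ ^ 2 / R := by
  have hτ : 0 < τ := hσ.trans_le hστ
  have hsx : x + τ • v - x = τ • v := add_sub_cancel_left _ _
  have hnorm : ‖τ • v‖ = τ * ‖v‖ := by rw [norm_smul, Real.norm_of_nonneg hτ.le]
  have h := hprox.infDist_add_smul_sub_le hS hR hx hxv (by rwa [hsx, hnorm])
    (div_nonneg hσ.le hτ.le) ((div_le_one hτ).2 hστ)
  rw [hsx, smul_smul, div_mul_cancel₀ _ hτ.ne', hnorm] at h
  calc distQuot S x v σ ≤ σ⁻¹ * (σ / τ * (τ * ‖v‖) ^ 2 / R) :=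
        mul_le_mul_of_nonneg_left h (inv_nonneg.2 hσ.le)
    _ = τ * ‖v‖ ^ 2 / R := by field_simp

/-- A chord `τ⁻¹ (s - x)` through an almost nearest point `s` of `x + τ u` is close to `u`, and
for small `τ` it is almost tangent on a whole interval `(0, τ]`. -/
theorem exists_eventually_distQuot_le [CompleteSpace H] (hS : IsClosed S)
    (hprox : IsProxRegular R S) (hR : 0 < R) (hx : x ∈ S) {u : H} {c κ : ℝ}
    (hu : ∃ᶠ τ in 𝓝[>] 0, distQuot S x u τ ≤ c) (hκ : 0 < κ) :
    ∃ v, dist u v ≤ c + κ ∧ ∀ᶠ σ in 𝓝[>] 0, distQuot S x v σ ≤ κ := by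
  set K := ‖u‖ + c + κ
  have hsmall : ∀ᶠ τ in 𝓝[>] (0 : ℝ), τ * K < R ∧ τ * K ^ 2 < κ * R := by
    have h0 : Tendsto (fun τ : ℝ => τ) (𝓝[>] 0) (𝓝 0) := nhdsWithin_le_nhds
    exact ((h0.mul_const K).eventually_lt_const (by simpa using hR)).and
      ((h0.mul_const (K ^ 2)).eventually_lt_const (by simpa using mul_pos hκ hR))
  obtain ⟨τ, hτc, ⟨hτK, hτK2⟩, hτ : 0 < τ⟩ :=
    (hu.and_eventually (hsmall.and (self_mem_nhdsWithin (s := Set.Ioi 0)))).exists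
  obtain ⟨s, hs, hds⟩ := (infDist_lt_iff ⟨x, hx⟩).1
    (lt_add_of_pos_right (infDist (x + τ • u) S) (mul_pos hκ hτ))
  set v := τ⁻¹ • (s - x)
  have hxv : x + τ • v = s := by
    simp only [v, smul_smul, mul_inv_cancel₀ (ne_of_gt hτ), one_smul, add_sub_cancel]
  have huv : dist u v ≤ c + κ := by
    have hdist : dist (x + τ • u) s = τ * dist u v := by
      rw [← hxv, dist_add_left, dist_smul₀, Real.norm_of_nonneg (le_of_lt hτ)]
    have hc : infDist (x + τ • u) S ≤ τ * c := by
      rwa [distQuot, inv_mul_le_iff₀ hτ] at hτc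
    rw [hdist] at hds
    exact le_of_lt <| lt_of_mul_lt_mul_left (by linarith) (le_of_lt hτ)
  have hv : ‖v‖ ≤ K := by
    have := norm_sub_norm_le v u
    rw [← dist_eq_norm, dist_comm] at this
    linarith
  have hτv : τ * ‖v‖ ≤ K * τ := by nlinarith [hτ]
  refine ⟨v, huv, ?_⟩
  filter_upwards [Ioc_mem_nhdsGT hτ] with σ ⟨hσ, hστ⟩
  refine (hprox.distQuot_le hS hR hx (hxv ▸ hs) (by linarith) hσ hστ).trans ?_
  rw [div_le_iff₀ hR]
  nlinarith [pow_le_pow_left₀ (norm_nonneg v) hv 2, hτ]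

theorem infDist_bouligandCone_le [CompleteSpace H] (hS : IsClosed S) (hprox : IsProxRegular R S)
    (hR : 0 < R) (hx : x ∈ S) {u : H} {c : ℝ} (hu : ∃ᶠ τ in 𝓝[>] 0, distQuot S x u τ ≤ c) :
    infDist u (bouligandCone S x) ≤ c := by
  refine le_of_forall_pos_lt_add fun ε hε => ?_
  obtain ⟨v, huv, hv⟩ := hprox.exists_eventually_distQuot_le hS hR hx hu (by positivity : 0 < ε / 4)
  obtain ⟨w, hvw, hw⟩ := exists_dist_le_forall_pos_of_refine
    (P := fun c v => ∀ᶠ τ in 𝓝[>] 0, distQuot S x v τ ≤ c)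
    (fun _ _ _ _ hv hvw => eventually_distQuot_le_of_dist_le hv hvw)
    (fun _ _ _ hv hκ => hprox.exists_eventually_distQuot_le hS hR hx hv.frequently hκ)
    hv (by positivity : 0 < ε / 4)
  calc infDist u (bouligandCone S x) ≤ dist u w :=
        infDist_le_dist_of_mem (mem_bouligandCone_of_forall_eventually_le hw)
    _ ≤ dist u v + dist v w := dist_triangle _ _ _
    _ < c + ε := by linarith

theorem tendsto_distQuot [CompleteSpace H] (hS : IsClosed S) (hprox : IsProxRegular R S)
    (hR : 0 < R) (hx : x ∈ S) (u : H) :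
    Tendsto (distQuot S x u) (𝓝[>] 0) (𝓝 (infDist u (bouligandCone S x))) := by
  refine tendsto_order.2 ⟨fun a ha => ?_, fun b hb => ?_⟩
  · by_contra h
    rw [not_eventually] at h
    exact (hprox.infDist_bouligandCone_le hS hR hx (h.mono fun _ => le_of_not_gt)).not_gt ha
  · obtain ⟨w, hw, huw⟩ := (infDist_lt_iff ⟨0, zero_mem_bouligandCone hx⟩).1 hb
    filter_upwards [hw.eventually_lt_const (sub_pos.2 huw), self_mem_nhdsWithin] with τ hτ hτ0
    linarith [distQuot_le_add_norm_sub (S := S) (x := x) u w hτ0, dist_eq_norm u w]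

theorem inner_le_of_tendsto_distQuot (hprox : IsProxRegular R S) (hR : 0 < R) (hx : x ∈ S)
    {ς u : H} {l : ℝ} (hς : ς ∈ proxNormalCone S x)
    (hu : Tendsto (distQuot S x u) (𝓝[>] 0) (𝓝 l)) : ⟪ς, u⟫ ≤ ‖ς‖ * l := by
  set g := distQuot S x u
  have hτ : Tendsto (fun τ : ℝ => τ) (𝓝[>] 0) (𝓝 0) := nhdsWithin_le_nhds
  have hF : Tendsto (fun τ => ‖ς‖ * (τ * (‖u‖ + g τ + τ) ^ 2 / (2 * R) + (g τ + τ))) (𝓝[>] 0)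
      (𝓝 (‖ς‖ * (0 * (‖u‖ + l + 0) ^ 2 / (2 * R) + (l + 0)))) :=
    tendsto_const_nhds.mul
      (((hτ.mul (((tendsto_const_nhds.add hu).add hτ).pow 2)).div_const _).add (hu.add hτ))
  refine (ge_of_tendsto hF (eventually_nhdsWithin_of_forall fun τ (hτ0 : 0 < τ) => ?_)).trans_eq
    (by simp)
  obtain ⟨s, hs, hds⟩ := (infDist_lt_iff ⟨x, hx⟩).1
    (lt_add_of_pos_right (infDist (x + τ • u) S) (pow_pos hτ0 2))
  have hdg : infDist (x + τ • u) S = τ * g τ := by simp only [g, distQuot]; field_simp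
  have hρ : dist (x + τ • u) s ≤ τ * (g τ + τ) := by nlinarith
  have hsx : ‖s - x‖ ≤ τ * (‖u‖ + g τ + τ) :=
    calc ‖s - x‖ = ‖τ • u - (x + τ • u - s)‖ := by congr 1; abel
      _ ≤ ‖τ • u‖ + ‖x + τ • u - s‖ := norm_sub_le _ _
      _ = τ * ‖u‖ + dist (x + τ • u) s := by
        rw [norm_smul, Real.norm_of_nonneg hτ0.le, dist_eq_norm]
      _ ≤ τ * (‖u‖ + g τ + τ) := by linarith
  have hsplit : τ * ⟪ς, u⟫ = ⟪ς, s - x⟫ + ⟪ς, x + τ • u - s⟫ := by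
    rw [← inner_add_right, show s - x + (x + τ • u - s) = τ • u by abel, real_inner_smul_right]
  have h1 : ⟪ς, s - x⟫ ≤ ‖ς‖ * (τ * (‖u‖ + g τ + τ)) ^ 2 / (2 * R) := by
    rw [le_div_iff₀ (by positivity)]
    linarith [hprox.two_mul_inner_le hR hx hς hs,
      mul_le_mul_of_nonneg_left (pow_le_pow_left₀ (norm_nonneg _) hsx 2) (norm_nonneg ς)]
  have h2 : ⟪ς, x + τ • u - s⟫ ≤ ‖ς‖ * (τ * (g τ + τ)) :=
    (real_inner_le_norm _ _).trans
      (mul_le_mul_of_nonneg_left (dist_eq_norm _ s ▸ hρ) (norm_nonneg ς))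
  refine le_of_mul_le_mul_left ?_ hτ0
  calc τ * ⟪ς, u⟫ ≤ ‖ς‖ * (τ * (‖u‖ + g τ + τ)) ^ 2 / (2 * R) + ‖ς‖ * (τ * (g τ + τ)) := by
        linarith
    _ = τ * (‖ς‖ * (τ * (‖u‖ + g τ + τ) ^ 2 / (2 * R) + (g τ + τ))) := by ring

theorem proxNormalCone_subset_polarCone (hprox : IsProxRegular R S) (hR : 0 < R) (hx : x ∈ S) :
    proxNormalCone S x ⊆ polarCone (bouligandCone S x) := fun _ hς _ hu => by
  simpa using hprox.inner_le_of_tendsto_distQuot hR hx hς hu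

theorem infDist_bouligandCone_le_sq [CompleteSpace H] (hS : IsClosed S)
    (hprox : IsProxRegular R S) (hR : 0 < R) (hx : x ∈ S) {s : H} (hs : s ∈ S) :
    infDist (s - x) (bouligandCone S x) ≤ ‖s - x‖ ^ 2 / R := by
  rcases le_or_gt ‖s - x‖ R with hsx | hsx
  · refine le_of_tendsto (hprox.tendsto_distQuot hS hR hx (s - x)) ?_
    filter_upwards [Ioc_mem_nhdsGT one_pos] with σ ⟨hσ, hσ1⟩
    simpa using hprox.distQuot_le hS hR hx (by simpa using hs) (by simpa using hsx) hσ hσ1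
  · calc infDist (s - x) (bouligandCone S x) ≤ dist (s - x) 0 :=
          infDist_le_dist_of_mem (zero_mem_bouligandCone hx)
      _ ≤ ‖s - x‖ ^ 2 / R := by
          rw [dist_zero_right, le_div_iff₀ hR, sq]
          exact mul_le_mul_of_nonneg_left hsx.le (norm_nonneg _)

theorem polarCone_bouligandCone_subset [CompleteSpace H] (hS : IsClosed S)
    (hprox : IsProxRegular R S) (hR : 0 < R) (hx : x ∈ S) :
    polarCone (bouligandCone S x) ⊆ proxNormalCone S x := fun ς hς =>
  mem_proxNormalCone_of_inner_le hx (by positivity : 0 ≤ ‖ς‖ / R) fun s hs =>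
    calc ⟪ς, s - x⟫ ≤ ‖ς‖ * infDist (s - x) (bouligandCone S x) :=
          inner_le_norm_mul_infDist_of_mem_polarCone ⟨0, zero_mem_bouligandCone hx⟩ hς _
      _ ≤ ‖ς‖ * (‖s - x‖ ^ 2 / R) := mul_le_mul_of_nonneg_left
          (hprox.infDist_bouligandCone_le_sq hS hR hx hs) (norm_nonneg _)
      _ = ‖ς‖ / R * ‖s - x‖ ^ 2 := by ring

end IsProxRegular

theorem stmt4_general [CompleteSpace H] (S : Set H) (hcl : IsClosed S)
    (R : ℝ) (hR : 0 < R) (hprox : IsProxRegular R S) (x : H) (hx : x ∈ S) :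
    (∀ u : H, ∃ l : ℝ, Tendsto (fun τ : ℝ => τ⁻¹ * infDist (x + τ • u) S)
        (𝓝[>] (0:ℝ)) (𝓝 l)) ∧
    proxNormalCone S x =
      polarCone {u : H | Tendsto (fun τ : ℝ => τ⁻¹ * infDist (x + τ • u) S)
        (𝓝[>] (0:ℝ)) (𝓝 0)} :=
  ⟨fun u => ⟨_, hprox.tendsto_distQuot hcl hR hx u⟩,
    (hprox.proxNormalCone_subset_polarCone hR hx).antisymm
      (hprox.polarCone_bouligandCone_subset hcl hR hx)⟩

theorem stmt4 [CompleteSpace H] (S : Set H) (hne : S.Nonempty) (hcl : IsClosed S)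
    (R : ℝ) (hR : 0 < R) (hprox : IsProxRegular R S) (x : H) (hx : x ∈ S) :
    (∀ u : H, ∃ l : ℝ, Tendsto (fun τ : ℝ => τ⁻¹ * infDist (x + τ • u) S)
        (𝓝[>] (0:ℝ)) (𝓝 l)) ∧
    proxNormalCone S x =
      polarCone {u : H | Tendsto (fun τ : ℝ => τ⁻¹ * infDist (x + τ • u) S)
        (𝓝[>] (0:ℝ)) (𝓝 0)} :=
  stmt4_general S hcl R hR hprox x hx
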